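/- Let f, g, h : ℝ → ℝ be bounded C^{1+σ} functions (0 < σ < 1) with h'(z) = |z|^σ on [-2a, 2a] where a = max(sup|f|, sup|g|), and assume f(c) ≠ g(c) for some c. Define u(t,x) = (f(x₂), 0, h(x₁ - t f(x₂))) and v(t,x) = (g(x₂), 0, h(x₁ - t g(x₂))). Then for every 0 < t ≤ 1, ‖u(t) - v(t)‖_{C^{1+σ}} ≥ 2, even though ‖u(0) - v(0)‖_{C^{1+σ}} = ‖f - g‖_{C^{1+σ}} can be made arbitrarily small. -/

import Mathlib

/-!
Put `T = t (f c - g c)`, so `0 < |T| ≤ 2a`. The points `x = (t g(c), c, 0)` and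
`y = (t f(c), c, 0)` are at distance `|T|`, and there `∂₁` of the third component of `u - v`
equals `h'(-T) - h'(0) = |T|^σ` and `h'(0) - h'(T) = -|T|^σ` respectively. Hence
`‖D(u - v)(x) - D(u - v)(y)‖ ≥ 2|T|^σ = 2‖x - y‖^σ`.
-/

open Set ContinuousLinearMap

/-- The paper's velocity field `u(t, ·)`; the coordinates `x₁, x₂` are `z 0, z 1`. -/
def shearFlow (f h : ℝ → ℝ) (t : ℝ) (z : Fin 3 → ℝ) : Fin 3 → ℝ :=
  ![f (z 1), 0, h (z 0 - t * f (z 1))]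

section
variable {ι : Type*} [Fintype ι] {f h : ℝ → ℝ} {t : ℝ} {x : ι → ℝ} {i j : ι}

theorem hasFDerivAt_comp_apply_sub_mul_comp_apply
    (hh : DifferentiableAt ℝ h (x i - t * f (x j))) (hf : DifferentiableAt ℝ f (x j)) :
    HasFDerivAt (fun z : ι → ℝ => h (z i - t * f (z j)))
      (deriv h (x i - t * f (x j)) •
        (proj i - (t * deriv f (x j)) • proj j : (ι → ℝ) →L[ℝ] ℝ)) x :=
  hh.hasDerivAt.comp_hasFDerivAt x <| (hasFDerivAt_apply i x).sub <|
    (hf.hasDerivAt.const_mul t).comp_hasFDerivAt (h₂ := fun y => t * f y) x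
      (hasFDerivAt_apply j x)

theorem fderiv_comp_apply_sub_mul_comp_apply_single [DecidableEq ι] (hij : i ≠ j)
    (hh : DifferentiableAt ℝ h (x i - t * f (x j))) (hf : DifferentiableAt ℝ f (x j)) :
    fderiv ℝ (fun z : ι → ℝ => h (z i - t * f (z j))) x (Pi.single i 1) =
      deriv h (x i - t * f (x j)) := by
  simp [(hasFDerivAt_comp_apply_sub_mul_comp_apply hh hf).fderiv, hij.symm]

end

section
variable {f h : ℝ → ℝ} {t : ℝ}

theorem differentiable_shearFlow (hf : Differentiable ℝ f) (hh : Differentiable ℝ h) :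
    Differentiable ℝ (shearFlow f h t) := by
  refine differentiable_pi.2 fun i => ?_
  fin_cases i <;> simp [shearFlow] <;> fun_prop

theorem fderiv_shearFlow_single_zero_two (hf : Differentiable ℝ f) (hh : Differentiable ℝ h)
    (x : Fin 3 → ℝ) :
    fderiv ℝ (shearFlow f h t) x (Pi.single 0 1) 2 = deriv h (x 0 - t * f (x 1)) := by
  calc _ = fderiv ℝ (fun z => shearFlow f h t z 2) x (Pi.single 0 1) := by
        rw [fderiv_apply (differentiable_shearFlow hf hh).differentiableAt]; rfl
    _ = _ := fderiv_comp_apply_sub_mul_comp_apply_single (by decide) (hh _) (hf _)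

theorem fderiv_sub_shearFlow_single_zero_two {g : ℝ → ℝ} (hf : Differentiable ℝ f)
    (hg : Differentiable ℝ g) (hh : Differentiable ℝ h) (x : Fin 3 → ℝ) :
    fderiv ℝ (fun z => shearFlow f h t z - shearFlow g h t z) x (Pi.single 0 1) 2 =
      deriv h (x 0 - t * f (x 1)) - deriv h (x 0 - t * g (x 1)) := by
  rw [fderiv_fun_sub (differentiable_shearFlow hf hh x) (differentiable_shearFlow hg hh x)]
  simp only [sub_apply, Pi.sub_apply, fderiv_shearFlow_single_zero_two hf hh,
    fderiv_shearFlow_single_zero_two hg hh]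

theorem fderiv_sub_shearFlow_jump {g : ℝ → ℝ} (hf : Differentiable ℝ f)
    (hg : Differentiable ℝ g) (hh : Differentiable ℝ h) (c : ℝ) :
    (fderiv ℝ (fun z => shearFlow f h t z - shearFlow g h t z) ![t * g c, c, 0] -
        fderiv ℝ (fun z => shearFlow f h t z - shearFlow g h t z) ![t * f c, c, 0])
        (Pi.single 0 1) 2 =
      deriv h (-(t * (f c - g c))) - 2 * deriv h 0 + deriv h (t * (f c - g c)) := by
  rw [sub_apply, Pi.sub_apply, fderiv_sub_shearFlow_single_zero_two hf hg hh,
    fderiv_sub_shearFlow_single_zero_two hf hg hh]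
  simp only [Matrix.cons_val_zero, Matrix.cons_val_one, sub_self]
  ring_nf

end

theorem abs_mul_sub_le_two_mul {t p q a : ℝ} (ht0 : 0 ≤ t) (ht1 : t ≤ 1) (hp : |p| ≤ a)
    (hq : |q| ≤ a) : |t * (p - q)| ≤ 2 * a := calc
  |t * (p - q)| = t * |p - q| := by rw [abs_mul, abs_of_nonneg ht0]
  _ ≤ 1 * (|p| + |q|) := by gcongr; exact abs_sub _ _
  _ ≤ 2 * a := by linarith

theorem shear_flow_illposed_C1sigma_general (σ : ℝ) (hσ0 : 0 < σ)
    (f g h : ℝ → ℝ) (hf : ContDiff ℝ 1 f) (hg : ContDiff ℝ 1 g) (hh : ContDiff ℝ 1 h)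
    (a : ℝ) (hfa : ∀ x, |f x| ≤ a) (hga : ∀ x, |g x| ≤ a)
    (hh' : ∀ z ∈ Icc (-(2 * a)) (2 * a), deriv h z = |z| ^ σ)
    (c : ℝ) (hc : f c ≠ g c)
    (t : ℝ) (ht0 : 0 < t) (ht1 : t ≤ 1) :
    ∀ K : ℝ,
      (∀ x y : Fin 3 → ℝ, x ≠ y →
        ‖fderiv ℝ
              (fun z : Fin 3 → ℝ =>
                ![f (z 1), (0 : ℝ), h (z 0 - t * f (z 1))] -
                  ![g (z 1), (0 : ℝ), h (z 0 - t * g (z 1))]) x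
            - fderiv ℝ
              (fun z : Fin 3 → ℝ =>
                ![f (z 1), (0 : ℝ), h (z 0 - t * f (z 1))] -
                  ![g (z 1), (0 : ℝ), h (z 0 - t * g (z 1))]) y‖
          ≤ K * ‖x - y‖ ^ σ) →
      2 ≤ K := by
  intro K hK
  set T := t * (f c - g c)
  have hT : 0 < |T| := abs_pos.2 (mul_ne_zero ht0.ne' (sub_ne_zero.2 hc))
  have hT_le : |T| ≤ 2 * a := abs_mul_sub_le_two_mul ht0.le ht1 (hfa c) (hga c)
  set x : Fin 3 → ℝ := ![t * g c, c, 0]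
  set y : Fin 3 → ℝ := ![t * f c, c, 0]
  have hxy : x - y = Pi.single 0 (-T) := by
    ext i; fin_cases i <;> simp [x, y, T]; ring
  set F := fun z => shearFlow f h t z - shearFlow g h t z
  have hK' : ‖fderiv ℝ F x - fderiv ℝ F y‖ ≤ K * |T| ^ σ := by
    have := hK x y (sub_ne_zero.1 (by rw [hxy]; simpa using hT.ne'))
    rwa [hxy, Pi.norm_single, norm_neg, Real.norm_eq_abs] at this
  have hjump : (fderiv ℝ F x - fderiv ℝ F y) (Pi.single 0 1) 2 = 2 * |T| ^ σ := by
    rw [fderiv_sub_shearFlow_jump (hf.differentiable one_ne_zero) (hg.differentiable one_ne_zero)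
      (hh.differentiable one_ne_zero), hh' _ (abs_le.1 (by rwa [abs_neg])), hh' _ (abs_le.1 hT_le),
      hh' 0 (abs_le.1 (by simpa using hT.le.trans hT_le)), abs_neg, abs_zero,
      Real.zero_rpow hσ0.ne']
    ring
  refine le_of_mul_le_mul_right ?_ (Real.rpow_pos_of_pos hT σ)
  calc 2 * |T| ^ σ = |(fderiv ℝ F x - fderiv ℝ F y) (Pi.single 0 1) 2| := by
        rw [hjump, abs_of_pos (by positivity : (0 : ℝ) < 2 * |T| ^ σ)]
    _ ≤ ‖fderiv ℝ F x - fderiv ℝ F y‖ * ‖(Pi.single 0 1 : Fin 3 → ℝ)‖ :=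
        (norm_le_pi_norm (_ : Fin 3 → ℝ) 2).trans (le_opNorm _ _)
    _ = ‖fderiv ℝ F x - fderiv ℝ F y‖ := by rw [Pi.norm_single, norm_one, mul_one]
    _ ≤ K * |T| ^ σ := hK'

theorem shear_flow_illposed_C1sigma (σ : ℝ) (hσ0 : 0 < σ) (hσ1 : σ < 1)
    (f g h : ℝ → ℝ) (hf : ContDiff ℝ 1 f) (hg : ContDiff ℝ 1 g) (hh : ContDiff ℝ 1 h)
    (Cf Cg Ch : ℝ)
    (hfH : ∀ x y : ℝ, |deriv f x - deriv f y| ≤ Cf * |x - y| ^ σ)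
    (hgH : ∀ x y : ℝ, |deriv g x - deriv g y| ≤ Cg * |x - y| ^ σ)
    (hhH : ∀ x y : ℝ, |deriv h x - deriv h y| ≤ Ch * |x - y| ^ σ)
    (a : ℝ) (hfa : ∀ x, |f x| ≤ a) (hga : ∀ x, |g x| ≤ a)
    (hh' : ∀ z ∈ Icc (-(2 * a)) (2 * a), deriv h z = |z| ^ σ)
    (c : ℝ) (hc : f c ≠ g c)
    (t : ℝ) (ht0 : 0 < t) (ht1 : t ≤ 1) :
    ∀ K : ℝ,
      (∀ x y : Fin 3 → ℝ, x ≠ y →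
        ‖fderiv ℝ
              (fun z : Fin 3 → ℝ =>
                ![f (z 1), (0 : ℝ), h (z 0 - t * f (z 1))] -
                  ![g (z 1), (0 : ℝ), h (z 0 - t * g (z 1))]) x
            - fderiv ℝ
              (fun z : Fin 3 → ℝ =>
                ![f (z 1), (0 : ℝ), h (z 0 - t * f (z 1))] -
                  ![g (z 1), (0 : ℝ), h (z 0 - t * g (z 1))]) y‖
          ≤ K * ‖x - y‖ ^ σ) →
      2 ≤ K :=
  shear_flow_illposed_C1sigma_general σ hσ0 f g h hf hg hh a hfa hga hh' c hc t ht0 ht1
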